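/- arXiv:1407.6692 — 5 statements merged into one kernel-verified Lean document; each statement's English description precedes it below -/
import Mathlib

section
/- In the ring R = Z_6[γ]/(γ^6 − 1), the 4×4 matrix M with rows (1,1,1,1), (0,1,3,4), (1,γ,γ³,γ⁴), (0,γ,3γ³,4γ⁴) has determinant γ(γ−1)⁴(γ²+4γ+1) = 3γ⁵ + 4γ⁴ + 3γ³ + 2γ, which is a nonzero element of R. -/
open Polynomial

/-- In `R = ℤ_6[γ]/(γ^6 − 1)`, the 4×4 interpolation matrix
with rows `(1,1,1,1)`, `(0,1,3,4)`, `(1,γ,γ³,γ⁴)`, `(0,γ,3γ³,4γ⁴)` has determinant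
`γ(γ−1)⁴(γ²+4γ+1) = 3γ⁵ + 4γ⁴ + 3γ³ + 2γ`, a nonzero element of `R`. -/
theorem stmt_6 :
    let R := AdjoinRoot (X ^ 6 - 1 : (ZMod 6)[X])
    let γ : R := AdjoinRoot.root _
    let M : Matrix (Fin 4) (Fin 4) R :=
      !![1, 1, 1, 1;
         0, 1, 3, 4;
         1, γ, γ ^ 3, γ ^ 4;
         0, γ, 3 * γ ^ 3, 4 * γ ^ 4]
    M.det = γ * (γ - 1) ^ 4 * (γ ^ 2 + 4 * γ + 1) ∧
    M.det = 3 * γ ^ 5 + 4 * γ ^ 4 + 3 * γ ^ 3 + 2 * γ ∧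
    M.det ≠ 0 := by
  intro R γ M
  have h60 : (6 : R) = 0 := by
    have h := map_natCast (algebraMap (ZMod 6) R) 6
    rw [show ((6 : ℕ) : ZMod 6) = 0 by decide, map_zero] at h
    exact_mod_cast h.symm
  have h6 : γ ^ 6 = 1 := by
    have h := AdjoinRoot.eval₂_root (X ^ 6 - 1 : (ZMod 6)[X])
    simp only [eval₂_sub, eval₂_pow, eval₂_X, eval₂_one, sub_eq_zero] at h
    exact h
  have hdet : M.det = γ ^ 7 - 9 * γ ^ 5 + 16 * γ ^ 4 - 9 * γ ^ 3 + γ := by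
    rw [show M.det = _ from Matrix.det_succ_row_zero M]
    simp [Fin.sum_univ_succ, Matrix.det_fin_three, M,
      show (Fin.succAbove 2 2 : Fin 4) = 3 from rfl,
      show (Fin.succAbove 1 2 : Fin 4) = 3 from rfl,
      show (Fin.succAbove 3 2 : Fin 4) = 2 from rfl,
      show (Fin.castSucc 2 : Fin 4) = 2 from rfl]
    ring
  have h7 : γ ^ 7 = γ := by
    calc γ ^ 7 = γ ^ 6 * γ := by ring
    _ = γ := by rw [h6, one_mul]
  have h2nd : M.det = 3 * γ ^ 5 + 4 * γ ^ 4 + 3 * γ ^ 3 + 2 * γ := by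
    rw [hdet, show γ ^ 7 = γ from h7]
    linear_combination (-2 * γ ^ 5 + 2 * γ ^ 4 - 2 * γ ^ 3) * h60
  refine ⟨by rw [hdet]; ring, h2nd, ?_⟩
  rw [h2nd]
  intro hzero
  have heval : ((X : (ZMod 6)[X]) ^ 6 - 1).eval₂ (RingHom.id (ZMod 6)) (-1) = 0 := by
    simp only [eval₂_sub, eval₂_pow, eval₂_X, eval₂_one]
    decide
  have h2 := congrArg (AdjoinRoot.lift (RingHom.id (ZMod 6)) (-1) heval) hzero
  have hroot : (AdjoinRoot.lift (RingHom.id (ZMod 6)) (-1) heval) γ = -1 :=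
    AdjoinRoot.lift_root heval
  simp only [map_add, map_mul, map_pow, map_ofNat, map_zero, hroot] at h2
  exact absurd h2 (by decide)
end

section
/- Let m = p_1···p_r with distinct primes, S = {a ∈ Z_m \ {0} : a mod p_i ∈ {0,1} ∀i}, and fix j ∈ [r]. In the polynomial ring F_{p_j}[x], the polynomial ∏_{ℓ∈S, ℓ≡0 mod p_j} (1 − x^ℓ) is not divisible by x^m − 1, where each ℓ is taken as its integer representative in {1,...,m−1}. -/
open Polynomial

/-- For `m = p_1 ⋯ p_r` a product of distinct primes,
`S = {a ∈ ℤ_m \ {0} : a mod p_i ∈ {0,1} ∀ i}` and any fixed `j`, the polynomial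
`∏_{ℓ ∈ S, ℓ ≡ 0 mod p_j} (1 − x^ℓ)` in `𝔽_{p_j}[x]` is not divisible by `x^m − 1`
(exponents `ℓ` taken as integer representatives). -/
theorem stmt_12 (r : ℕ) (p : Fin r → ℕ) (hp : ∀ i, (p i).Prime)
    (hinj : Function.Injective p) (m : ℕ) (hm : m = ∏ i, p i) (j : Fin r) :
    haveI : NeZero m := ⟨by
      simp only [hm]
      exact Finset.prod_ne_zero_iff.mpr fun i _ => (hp i).pos.ne'⟩
    ¬ ((X ^ m - 1 : (ZMod (p j))[X]) ∣
        ∏ ℓ ∈ Finset.univ.filter (fun a : ZMod m =>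
            a ≠ 0 ∧ (∀ i, a.val % p i = 0 ∨ a.val % p i = 1) ∧ a.val % p j = 0),
          (1 - X ^ ℓ.val : (ZMod (p j))[X])) := by
  haveI : NeZero m := ⟨by
    simp only [hm]
    exact Finset.prod_ne_zero_iff.mpr fun i _ => (hp i).pos.ne'⟩
  intro hdvd
  haveI : Fact (p j).Prime := ⟨hp j⟩
  set q := p j with hq
  set m' := ∏ i ∈ Finset.univ.erase j, p i with hm'
  have hmfac : m = q * m' := by
    rw [hm, hm', ← Finset.mul_prod_erase _ _ (Finset.mem_univ j)]
  have hm'pos : 0 < m' := Finset.prod_pos fun i _ => (hp i).pos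
  have hcop : Nat.Coprime q m' := by
    refine Nat.Coprime.prod_right fun i hi => ?_
    exact (Nat.coprime_primes (hp j) (hp i)).mpr
      fun h => (Finset.mem_erase.mp hi).1 (hinj h).symm
  -- a primitive m'-th root of unity in the algebraic closure
  set K := AlgebraicClosure (ZMod q)
  haveI : CharP K q := charP_of_injective_algebraMap
    (algebraMap (ZMod q) K).injective q
  have hpm' : ¬ q ∣ m' := (Nat.Prime.coprime_iff_not_dvd (hp j)).mp hcop
  have hne : ((m' : ℕ) : K) ≠ 0 := by
    rw [Ne, CharP.cast_eq_zero_iff K q]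
    exact hpm'
  haveI : NeZero ((m' : ℕ) : K) := ⟨hne⟩
  obtain ⟨ζ, hζ⟩ := IsAlgClosed.exists_root _ (degree_cyclotomic_pos m' K hm'pos).ne.symm
  have hζ' : IsPrimitiveRoot ζ m' := Polynomial.isRoot_cyclotomic_iff.mp hζ
  -- map the divisibility along eval at ζ
  have h0 : Polynomial.aeval ζ (X ^ m - 1 : (ZMod q)[X]) = 0 := by
    simp only [map_sub, map_pow, map_one, aeval_X]
    rw [hmfac, mul_comm, pow_mul, hζ'.pow_eq_one, one_pow, sub_self]
  have hprodzero : Polynomial.aeval ζ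
      (∏ ℓ ∈ Finset.univ.filter (fun a : ZMod m =>
            a ≠ 0 ∧ (∀ i, a.val % p i = 0 ∨ a.val % p i = 1) ∧ a.val % p j = 0),
          (1 - X ^ ℓ.val : (ZMod q)[X])) = 0 := by
    obtain ⟨c, hc⟩ := hdvd
    rw [hc, map_mul, h0, zero_mul]
  rw [map_prod] at hprodzero
  obtain ⟨ℓ, hℓmem, hℓ⟩ := Finset.prod_eq_zero_iff.mp hprodzero
  simp only [Finset.mem_filter, Finset.mem_univ, true_and] at hℓmem
  obtain ⟨hℓ0, -, hℓq⟩ := hℓmem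
  simp only [map_sub, map_pow, map_one, aeval_X, sub_eq_zero] at hℓ
  -- so ζ^(ℓ.val) = 1, i.e. m' ∣ ℓ.val
  have hdvd' : m' ∣ ℓ.val := hζ'.dvd_of_pow_eq_one _ hℓ.symm
  obtain ⟨k, hk⟩ := hdvd'
  have hqk : q ∣ k := by
    have : q ∣ m' * k := hk ▸ Nat.dvd_of_mod_eq_zero hℓq
    exact (Nat.Coprime.dvd_of_dvd_mul_left hcop this)
  have hkpos : 0 < k := by
    rcases Nat.eq_zero_or_pos k with h | h
    · exact absurd ((ZMod.val_eq_zero ℓ).mp (by rw [hk, h, mul_zero])) hℓ0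
    · exact h
  have hlt : ℓ.val < m := ZMod.val_lt ℓ
  have : m ≤ ℓ.val := by
    calc m = q * m' := hmfac
    _ ≤ k * m' := Nat.mul_le_mul_right _ (Nat.le_of_dvd hkpos hqk)
    _ = ℓ.val := by rw [hk, mul_comm]
  omega
end

section
/- Let m = p_1···p_r with distinct primes, q = 2^{r−1}, S = {a ∈ Z_m \ {0} : a mod p_i ∈ {0,1} ∀i}, R = Z_m[γ]/(γ^m−1), and t_i = i−1 for i ∈ [q]. Let M be the 2q×2q matrix over R with columns indexed by ℓ ∈ {0} ∪ S and row pairs (γ^{t_i ℓ}, ℓ·γ^{t_i ℓ}) for i ∈ [q]. Then there exists a row vector λ ∈ R^{2q} such that λM = (μ, 0, ..., 0) where μ ∈ R satisfies μ mod p_i ≠ 0 for every i ∈ [r]. -/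
open Polynomial

/-- Coefficient-wise reduction `ℤ_m[γ]/(γ^m−1) → ℤ_p[γ]/(γ^m−1)` for `p ∣ m`. -/
noncomputable def redHom (m p : ℕ) (h : p ∣ m) :
    AdjoinRoot (X ^ m - 1 : (ZMod m)[X]) →+* AdjoinRoot (X ^ m - 1 : (ZMod p)[X]) :=
  AdjoinRoot.lift
    ((algebraMap (ZMod p) (AdjoinRoot (X ^ m - 1 : (ZMod p)[X]))).comp (ZMod.castHom h (ZMod p)))
    (AdjoinRoot.root _)
    (by
      have h0 : (AdjoinRoot.root (X ^ m - 1 : (ZMod p)[X])) ^ m - 1 = 0 := by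
        have h1 : (AdjoinRoot.mk (X ^ m - 1 : (ZMod p)[X])) (X ^ m - 1) = 0 :=
          AdjoinRoot.mk_self
        rw [map_sub, map_pow, AdjoinRoot.mk_X, map_one] at h1
        exact h1
      simp [Polynomial.eval₂_sub, Polynomial.eval₂_pow, h0])

lemma redHom_mk (m p : ℕ) (h : p ∣ m) (g : (ZMod m)[X]) :
    redHom m p h (AdjoinRoot.mk _ g) = AdjoinRoot.mk _ (g.map (ZMod.castHom h (ZMod p))) := by
  rw [redHom, AdjoinRoot.lift_mk, ← AdjoinRoot.aeval_eq, aeval_def, eval₂_map]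

lemma redHom_root (m p : ℕ) (h : p ∣ m) :
    redHom m p h (AdjoinRoot.root _) = AdjoinRoot.root _ :=
  AdjoinRoot.lift_root _


section CRT
variable {r : ℕ} {p : Fin r → ℕ} (hp : ∀ i, (p i).Prime) (hinj : Function.Injective p)
  {m : ℕ} (hm : m = ∏ i, p i)

include hp hinj hm in
lemma m_dvd_of_all {n : ℕ} (h : ∀ j, p j ∣ n) : m ∣ n := by
  subst hm
  have : ∏ i, p i = ∏ q ∈ Finset.univ.image p, q :=
    (Finset.prod_image (g := p) (f := fun q => q) (fun a _ b _ h => hinj h)).symm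
  rw [this]
  refine Finset.prod_primes_dvd n (fun q hq => ?_) (fun q hq => ?_) <;>
  · obtain ⟨i, -, rfl⟩ := Finset.mem_image.mp hq
    first
    | exact (hp i).prime
    | exact h i

include hp hinj hm in
lemma zmod_zero_of_all (hd : ∀ j, p j ∣ m) (h2 : 2 ≤ m) (a : ZMod m)
    (h : ∀ j, ZMod.castHom (hd j) (ZMod (p j)) a = 0) : a = 0 := by
  haveI : NeZero m := ⟨by omega⟩
  have hdv : ∀ j, p j ∣ a.val := by
    intro j
    have := h j
    rw [ZMod.castHom_apply, ← ZMod.natCast_val] at this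
    exact (ZMod.natCast_eq_zero_iff _ _).mp this
  have hmv : m ∣ a.val := m_dvd_of_all hp hinj hm hdv
  have : a.val = 0 := Nat.eq_zero_of_dvd_of_lt hmv (ZMod.val_lt a)
  exact (ZMod.val_eq_zero a).mp this

include hp hinj hm in
lemma zmod_surj (hd : ∀ j, p j ∣ m) (h2 : 2 ≤ m) :
    Function.Surjective (fun (a : ZMod m) (j : Fin r) => ZMod.castHom (hd j) (ZMod (p j)) a) := by
  haveI : NeZero m := ⟨by omega⟩
  haveI : ∀ j, NeZero (p j) := fun j => ⟨(hp j).pos.ne'⟩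
  have hinj2 : Function.Injective
      (fun (a : ZMod m) (j : Fin r) => ZMod.castHom (hd j) (ZMod (p j)) a) := by
    intro a b hab
    have : a - b = 0 := by
      refine zmod_zero_of_all hp hinj hm hd h2 _ (fun j => ?_)
      have := congrFun hab j
      simp only at this
      rw [map_sub, this, sub_self]
    linear_combination this
  refine (Fintype.bijective_iff_injective_and_card _).mpr ⟨hinj2, ?_⟩ |>.2
  rw [Fintype.card_pi]
  simp only [ZMod.card]
  exact hm

end CRT


section Red
variable {r : ℕ} {p : Fin r → ℕ} (hp : ∀ i, (p i).Prime) (hinj : Function.Injective p)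
  {m : ℕ} (hm : m = ∏ i, p i) (hd : ∀ j, p j ∣ m) (h2 : 2 ≤ m)

include hp hinj hm h2 in
lemma red_ker (y : AdjoinRoot (X ^ m - 1 : (ZMod m)[X]))
    (h0 : ∀ j, redHom m (p j) (hd j) y = 0) : y = 0 := by
  haveI : NeZero m := ⟨by omega⟩
  haveI : Fact (1 < m) := ⟨by omega⟩
  have hm0 : 0 < m := by omega
  obtain ⟨g, rfl⟩ := AdjoinRoot.mk_surjective y
  have hmonic : (X ^ m - 1 : (ZMod m)[X]).Monic := by
    have := monic_X_pow_sub_C (1 : ZMod m) (n := m) hm0.ne'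
    simpa using this
  set g' : (ZMod m)[X] := g %ₘ (X ^ m - 1) with hg'
  have hmk : AdjoinRoot.mk (X ^ m - 1 : (ZMod m)[X]) g = AdjoinRoot.mk _ g' := by
    rw [AdjoinRoot.mk_eq_mk]
    have := modByMonic_add_div g (X ^ m - 1)
    exact ⟨g /ₘ (X ^ m - 1), by linear_combination this.symm⟩
  rw [hmk]
  have hdeg : g'.degree < (m : ℕ) := by
    have := degree_modByMonic_lt g hmonic
    have hdm : (X ^ m - 1 : (ZMod m)[X]).degree = (m : ℕ) := by
      have := degree_X_pow_sub_C (R := ZMod m) (a := (1 : ZMod m)) hm0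
      simpa using this
    rwa [hdm] at this
  have hzero : ∀ j, g'.map (ZMod.castHom (hd j) (ZMod (p j))) = 0 := by
    intro j
    haveI : Fact (p j).Prime := ⟨hp j⟩
    have h := h0 j
    rw [hmk, redHom_mk] at h
    have hdvd := (AdjoinRoot.mk_eq_zero).mp h
    by_contra hne
    have hle := degree_le_of_dvd hdvd hne
    have hdm : (X ^ m - 1 : (ZMod (p j))[X]).degree = (m : ℕ) := by
      have := degree_X_pow_sub_C (R := ZMod (p j)) (a := (1 : ZMod (p j))) hm0
      simpa using this
    rw [hdm] at hle
    have := lt_of_le_of_lt (le_trans hle (degree_map_le)) hdeg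
    exact absurd this (lt_irrefl _)
  have hg0 : g' = 0 := by
    ext k
    have hc : ∀ j, ZMod.castHom (hd j) (ZMod (p j)) (g'.coeff k) = 0 := by
      intro j
      have := congrArg (fun q => Polynomial.coeff q k) (hzero j)
      simpa [coeff_map] using this
    simpa using zmod_zero_of_all hp hinj hm hd h2 _ hc
  rw [hg0, map_zero]

include hp hinj hm h2 in
lemma red_surj (x : ∀ j, AdjoinRoot (X ^ m - 1 : (ZMod (p j))[X])) :
    ∃ y, ∀ j, redHom m (p j) (hd j) y = x j := by
  choose g hg using fun j => AdjoinRoot.mk_surjective (x j)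
  set D := (Finset.univ.sup fun j => (g j).natDegree) + 1 with hD
  choose c hc using fun k : ℕ => zmod_surj hp hinj hm hd h2 (fun j => (g j).coeff k)
  refine ⟨AdjoinRoot.mk _ (∑ k ∈ Finset.range D, Polynomial.monomial k (c k)), fun j => ?_⟩
  rw [redHom_mk]
  have hmap : (∑ k ∈ Finset.range D, Polynomial.monomial k (c k)).map
      (ZMod.castHom (hd j) (ZMod (p j))) = g j := by
    ext k
    rw [coeff_map, finset_sum_coeff]
    simp only [coeff_monomial]
    rw [Finset.sum_ite_eq' (Finset.range D) k c]
    by_cases hk : k ∈ Finset.range D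
    · rw [if_pos hk]
      exact congrFun (hc k) j
    · rw [if_neg hk, map_zero]
      refine (coeff_eq_zero_of_natDegree_lt ?_).symm
      have : (g j).natDegree ≤ Finset.univ.sup fun j => (g j).natDegree :=
        Finset.le_sup (f := fun j => (g j).natDegree) (Finset.mem_univ j)
      simp only [Finset.mem_range, not_lt] at hk
      omega
  rw [hmap, hg]

end Red

lemma eval_one_prod_ne_zero (p' : ℕ) (hp' : p'.Prime) (m m'' : ℕ) (hmm : p' * m'' = m)
    (hm''0 : m'' ≠ 0) (hcop : Nat.Coprime p' m'') (T : Finset (ZMod m))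
    (hT : ∀ ℓ' ∈ T, ¬ m'' ∣ (ℓ' : ZMod m).val) :
    Polynomial.eval 1
      (∏ ℓ' ∈ T, (X - C ((AdjoinRoot.root (X ^ m - 1 : (ZMod p')[X])) ^ (ℓ' : ZMod m).val)))
      ≠ 0 := by
  haveI : Fact p'.Prime := ⟨hp'⟩
  haveI : NeZero m'' := ⟨hm''0⟩
  set u := ZMod.unitOfCoprime p' hcop with hu
  set n := orderOf u with hn
  have hn0 : 0 < n := orderOf_pos u
  have hdvd : m'' ∣ p' ^ n - 1 := by
    have h1 : ((p' ^ n - 1 : ℕ) : ZMod m'') = 0 := by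
      have hu1 : ((u : ZMod m'')) ^ n = 1 := by
        rw [← Units.val_pow_eq_pow_val, pow_orderOf_eq_one, Units.val_one]
      have hp1 : ((p' : ZMod m'')) ^ n = 1 := by
        rw [← ZMod.coe_unitOfCoprime p' hcop]; exact hu1
      rw [Nat.cast_sub (Nat.one_le_pow _ _ hp'.pos), Nat.cast_pow, hp1, Nat.cast_one, sub_self]
    exact (ZMod.natCast_eq_zero_iff _ _).mp h1
  set F := GaloisField p' n with hF
  have hcardF : Nat.card F = p' ^ n := GaloisField.card p' n hn0.ne'
  haveI : Finite F := (Nat.card_pos_iff.mp (by rw [hcardF]; exact Nat.pow_pos hp'.pos)).2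
  have hcardU : Nat.card Fˣ = p' ^ n - 1 := by rw [Nat.card_units, hcardF]
  obtain ⟨g0, hg0⟩ := IsCyclic.exists_ofOrder_eq_natCard (α := Fˣ)
  have hNne : p' ^ n - 1 ≠ 0 := by
    have := Nat.one_lt_pow hn0.ne' hp'.one_lt
    omega
  set ω' := g0 ^ ((p' ^ n - 1) / m'') with hω'
  have hord' : orderOf ω' = m'' := by
    rw [hω', orderOf_pow, hg0, hcardU, Nat.gcd_eq_right (Nat.div_dvd_of_dvd hdvd),
      Nat.div_div_self hdvd hNne]
  set ω : F := (ω' : F) with hω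
  have hordω : orderOf ω = m'' := by rw [hω, orderOf_units]; exact hord'
  have hωm : ω ^ m = 1 := by
    rw [← hmm, mul_comm, pow_mul, ← hordω, pow_orderOf_eq_one, one_pow]
  have hψ0 : Polynomial.eval₂ (ZMod.castHom dvd_rfl F) ω (X ^ m - 1 : (ZMod p')[X]) = 0 := by
    rw [eval₂_sub, eval₂_pow, eval₂_X, eval₂_one, hωm, sub_self]
  set ψ := AdjoinRoot.lift (ZMod.castHom dvd_rfl F) ω hψ0 with hψ
  intro h0
  have hψroot : ψ (AdjoinRoot.root (X ^ m - 1 : (ZMod p')[X])) = ω := AdjoinRoot.lift_root hψ0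
  have heval : ψ (Polynomial.eval 1
      (∏ ℓ' ∈ T, (X - C ((AdjoinRoot.root (X ^ m - 1 : (ZMod p')[X])) ^ (ℓ' : ZMod m).val))))
      = ∏ ℓ' ∈ T, (1 - ω ^ (ℓ' : ZMod m).val) := by
    rw [eval_prod, map_prod]
    refine Finset.prod_congr rfl (fun ℓ' _ => ?_)
    rw [eval_sub, eval_X, eval_C, map_sub, map_one, map_pow, hψroot]
  rw [h0, map_zero] at heval
  have : ∏ ℓ' ∈ T, (1 - ω ^ (ℓ' : ZMod m).val) ≠ 0 := by
    rw [Finset.prod_ne_zero_iff]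
    intro ℓ' hℓ'
    rw [sub_ne_zero]
    intro heq
    have : m'' ∣ (ℓ' : ZMod m).val := by
      rw [← hordω]
      exact orderOf_dvd_of_pow_eq_one heq.symm
    exact hT ℓ' hℓ' this
  exact this heval.symm


/-- Lemma `lem-lambda`: With `m = p_1 ⋯ p_r` a product of distinct primes,
`q = 2^{r−1}`, `S = {a ∈ ℤ_m \ {0} : a mod p_i ∈ {0,1} ∀ i}`, `R = ℤ_m[γ]/(γ^m−1)` and
`t_i = i − 1`, there is a row vector `λ = (α_1,β_1,…,α_q,β_q) ∈ R^{2q}` such that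
`λM = (μ,0,…,0)` where `M` is the matrix with columns indexed by `ℓ ∈ {0} ∪ S` and row
pairs `(γ^{t_i ℓ}, ℓ·γ^{t_i ℓ})`, and `μ mod p_i ≠ 0` for every `i`. Equivalently: the
combination `Σ_i (α_i + ℓ·β_i) γ^{t_i ℓ}` vanishes for every `ℓ ∈ S` and equals `μ` at
`ℓ = 0`. -/
theorem stmt_15 (r : ℕ) (hr : 1 ≤ r) (p : Fin r → ℕ) (hp : ∀ i, (p i).Prime)
    (hinj : Function.Injective p) (m : ℕ) (hm : m = ∏ i, p i)
    (q : ℕ) (hq : q = 2 ^ (r - 1)) :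
    let R := AdjoinRoot (X ^ m - 1 : (ZMod m)[X])
    let γ : R := AdjoinRoot.root _
    ∃ (α β : Fin q → R) (μ : R),
      (∀ j : Fin r,
        redHom m (p j) (hm ▸ Finset.dvd_prod_of_mem p (Finset.mem_univ j)) μ ≠ 0) ∧
      (∀ ℓ : ZMod m, ℓ ≠ 0 → (∀ i, ℓ.val % p i = 0 ∨ ℓ.val % p i = 1) →
        ∑ i : Fin q, (α i + (ℓ.val : R) * β i) * γ ^ ((i : ℕ) * ℓ.val) = 0) ∧
      (∑ i : Fin q, α i = μ) := by
  intro R γ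
  classical
  have hd : ∀ j, p j ∣ m := fun j => hm ▸ Finset.dvd_prod_of_mem p (Finset.mem_univ j)
  have h2 : 2 ≤ m := by
    have hm0 : m ≠ 0 := by
      rw [hm]
      exact Finset.prod_ne_zero_iff.mpr (fun i _ => (hp i).pos.ne')
    have hj : (0 : ℕ) < r := hr
    let j : Fin r := ⟨0, hj⟩
    have h1 := Nat.le_of_dvd (Nat.pos_of_ne_zero hm0) (hd j)
    have h2 := (hp j).two_le
    omega
  haveI : NeZero m := ⟨by omega⟩
  have hq1 : 1 ≤ q := by rw [hq]; exact Nat.one_le_two_pow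
  -- the sets S_j
  set Sset : Fin r → Finset (ZMod m) := fun j =>
    Finset.univ.filter
      (fun ℓ => ℓ ≠ 0 ∧ (∀ i, ℓ.val % p i = 0 ∨ ℓ.val % p i = 1) ∧ ℓ.val % p j = 0)
    with hSset
  have hexists1 : ∀ ℓ : ZMod m, ℓ ≠ 0 → (∀ i, ℓ.val % p i = 0 ∨ ℓ.val % p i = 1) →
      ∃ i, ℓ.val % p i = 1 := by
    intro ℓ hne hres
    by_contra hall
    push_neg at hall
    have hdv : ∀ i, p i ∣ ℓ.val := fun i =>
      Nat.dvd_of_mod_eq_zero ((hres i).resolve_right (hall i))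
    have hml := m_dvd_of_all hp hinj hm hdv
    have hv : ℓ.val = 0 := Nat.eq_zero_of_dvd_of_lt hml (ZMod.val_lt ℓ)
    exact hne ((ZMod.val_eq_zero ℓ).mp hv)
  -- cardinality bound
  have hcard : ∀ j, (Sset j).card < q := by
    intro j
    set Fmap : ZMod m → Finset (Fin r) :=
      fun ℓ => Finset.univ.filter (fun i => ℓ.val % p i = 1) with hFmap
    have hInj : Set.InjOn Fmap (Sset j) := by
      intro a ha b hb hab
      have ha' := (Finset.mem_filter.mp ha).2
      have hb' := (Finset.mem_filter.mp hb).2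
      have hcomp : ∀ i, ZMod.castHom (hd i) (ZMod (p i)) a = ZMod.castHom (hd i) (ZMod (p i)) b := by
        intro i
        have hmods : a.val % p i = b.val % p i := by
          by_cases hA : a.val % p i = 1
          · have h1 : i ∈ Fmap a := by simp [hFmap, hA]
            rw [hab] at h1
            have hB : b.val % p i = 1 := by simpa [hFmap] using h1
            rw [hA, hB]
          · have h0a : a.val % p i = 0 := (ha'.2.1 i).resolve_right hA
            have h1 : i ∉ Fmap a := by simp [hFmap, hA]
            rw [hab] at h1
            have hB : b.val % p i ≠ 1 := by simpa [hFmap] using h1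
            have h0b := (hb'.2.1 i).resolve_right hB
            rw [h0a, h0b]
        rw [ZMod.castHom_apply, ZMod.castHom_apply, ← ZMod.natCast_val, ← ZMod.natCast_val,
          ← ZMod.natCast_mod a.val (p i), ← ZMod.natCast_mod b.val (p i), hmods]
      have hz := zmod_zero_of_all hp hinj hm hd h2 (a - b)
        (fun i => by rw [map_sub, hcomp i, sub_self])
      exact sub_eq_zero.mp hz
    have hsub : (Sset j).image Fmap ⊆ ((Finset.univ.erase j)).powerset.erase ∅ := by
      intro T hT
      obtain ⟨ℓ, hℓ, rfl⟩ := Finset.mem_image.mp hT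
      have hℓ' := (Finset.mem_filter.mp hℓ).2
      refine Finset.mem_erase.mpr ⟨?_, Finset.mem_powerset.mpr ?_⟩
      · obtain ⟨i, hi⟩ := hexists1 ℓ hℓ'.1 hℓ'.2.1
        exact Finset.ne_empty_of_mem (a := i) (by simp [hFmap, hi])
      · intro i hi
        have hi1 : ℓ.val % p i = 1 := by simpa [hFmap] using hi
        have hij : i ≠ j := by
          intro he
          rw [he] at hi1
          have := hℓ'.2.2
          omega
        exact Finset.mem_erase.mpr ⟨hij, Finset.mem_univ i⟩
    have hcount : (((Finset.univ.erase j)).powerset.erase ∅).card = 2 ^ (r - 1) - 1 := by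
      rw [Finset.card_erase_of_mem (Finset.empty_mem_powerset _), Finset.card_powerset,
        Finset.card_erase_of_mem (Finset.mem_univ j), Finset.card_univ, Fintype.card_fin]
    have h1 : (Sset j).card = ((Sset j).image Fmap).card := (Finset.card_image_of_injOn hInj).symm
    have h2' : ((Sset j).image Fmap).card ≤ 2 ^ (r - 1) - 1 := by
      rw [← hcount]; exact Finset.card_le_card hsub
    have h3 : 0 < 2 ^ (r - 1) := by positivity
    rw [hq]; omega
  -- the polynomials A j
  set A : ∀ j : Fin r, Polynomial (AdjoinRoot (X ^ m - 1 : (ZMod (p j))[X])) := fun j =>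
    ∏ ℓ' ∈ Sset j, (X - C ((AdjoinRoot.root (X ^ m - 1 : (ZMod (p j))[X])) ^ (ℓ' : ZMod m).val))
    with hA
  have hdegA : ∀ j, (A j).natDegree < q := by
    intro j
    haveI : Fact (p j).Prime := ⟨hp j⟩
    haveI : Nontrivial (AdjoinRoot (X ^ m - 1 : (ZMod (p j))[X])) := by
      refine AdjoinRoot.nontrivial _ ?_
      have hdm : (X ^ m - 1 : (ZMod (p j))[X]).degree = (m : ℕ) := by
        simpa using degree_X_pow_sub_C (show 0 < m by omega) (1 : ZMod (p j))
      rw [hdm]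
      exact_mod_cast (show m ≠ 0 by omega)
    have hdd : (A j).natDegree = (Sset j).card := by
      rw [hA]
      rw [natDegree_prod_of_monic _ _ (fun _ _ => monic_X_sub_C _)]
      simp only [natDegree_X_sub_C]
      rw [Finset.sum_const, smul_eq_mul, mul_one]
    rw [hdd]
    exact hcard j
  -- define α via CRT surjectivity
  choose αf hαf using fun i : Fin q => red_surj hp hinj hm hd h2 (fun j => (A j).coeff i)
  refine ⟨αf, fun i => -αf i, ∑ i, αf i, ?_, ?_, rfl⟩
  · -- nonvanishing of μ mod p j
    intro j
    show redHom m (p j) (hd j) (∑ i, αf i) ≠ 0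
    have hred : redHom m (p j) (hd j) (∑ i, αf i) = Polynomial.eval 1 (A j) := by
      rw [map_sum]
      rw [Finset.sum_congr rfl (fun i _ => hαf i j)]
      rw [eval_eq_sum_range' (hdegA j), Finset.sum_range]
      simp
    rw [hred]
    have hmm : p j * (m / p j) = m := Nat.mul_div_cancel' (hd j)
    have hm''0 : m / p j ≠ 0 := (Nat.div_pos (Nat.le_of_dvd (by omega) (hd j)) (hp j).pos).ne'
    have hm'' : m / p j = ∏ i ∈ Finset.univ.erase j, p i := by
      have hsplit := Finset.mul_prod_erase Finset.univ p (Finset.mem_univ j)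
      rw [hm, ← hsplit]
      exact Nat.mul_div_cancel_left _ (hp j).pos
    have hcop : Nat.Coprime (p j) (m / p j) := by
      rw [hm'']
      refine Nat.Coprime.prod_right (fun i hi => ?_)
      exact (Nat.coprime_primes (hp j) (hp i)).mpr
        (fun he => (Finset.mem_erase.mp hi).1 (hinj he.symm))
    have hT : ∀ ℓ' ∈ Sset j, ¬ (m / p j) ∣ (ℓ' : ZMod m).val := by
      intro ℓ' hℓ' hdvd'
      have hℓ'' := (Finset.mem_filter.mp hℓ').2
      obtain ⟨i, hi1⟩ := hexists1 ℓ' hℓ''.1 hℓ''.2.1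
      have hij : i ≠ j := by
        intro he
        rw [he] at hi1
        have := hℓ''.2.2
        omega
      have hpi : p i ∣ m / p j := by
        rw [hm'']
        exact Finset.dvd_prod_of_mem p (Finset.mem_erase.mpr ⟨hij, Finset.mem_univ i⟩)
      have hpiv : p i ∣ (ℓ' : ZMod m).val := hpi.trans hdvd'
      have := Nat.mod_eq_zero_of_dvd hpiv
      omega
    exact eval_one_prod_ne_zero (p j) (hp j) m (m / p j) hmm hm''0 hcop (Sset j) hT
  · -- the vanishing
    intro ℓ hne hres
    refine red_ker hp hinj hm hd h2 _ (fun j => ?_)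
    have hγroot : redHom m (p j) (hd j) γ = AdjoinRoot.root _ := AdjoinRoot.lift_root _
    rw [map_sum]
    have hterm : ∀ i : Fin q,
        redHom m (p j) (hd j) ((αf i + (ℓ.val : R) * (-αf i)) * γ ^ ((i : ℕ) * ℓ.val))
          = ((A j).coeff i + ((ℓ.val : ℕ) : AdjoinRoot (X ^ m - 1 : (ZMod (p j))[X]))
              * (-(A j).coeff i))
            * (AdjoinRoot.root (X ^ m - 1 : (ZMod (p j))[X])) ^ ((i : ℕ) * ℓ.val) := by
      intro i
      rw [map_mul, map_add, map_mul, map_neg, map_pow, map_natCast, hαf i j, hγroot]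
    rcases hres j with h0 | h1
    · -- residue 0 : sum is A j evaluated at root^ℓ.val
      have hzero : ((ℓ.val : ℕ) : AdjoinRoot (X ^ m - 1 : (ZMod (p j))[X])) = 0 := by
        have hz : ((ℓ.val : ℕ) : ZMod (p j)) = 0 := by
          rw [← ZMod.natCast_mod, h0, Nat.cast_zero]
        rw [← map_natCast (algebraMap (ZMod (p j)) (AdjoinRoot (X ^ m - 1 : (ZMod (p j))[X]))),
          hz, map_zero]
      have hev : Polynomial.eval
          ((AdjoinRoot.root (X ^ m - 1 : (ZMod (p j))[X])) ^ ℓ.val) (A j) = 0 := by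
        rw [hA, eval_prod]
        refine Finset.prod_eq_zero (i := ℓ) ?_ ?_
        · rw [hSset]
          exact Finset.mem_filter.mpr ⟨Finset.mem_univ _, hne, hres, h0⟩
        · rw [eval_sub, eval_X, eval_C, sub_self]
      calc ∑ i : Fin q,
            redHom m (p j) (hd j) ((αf i + (ℓ.val : R) * (-αf i)) * γ ^ ((i : ℕ) * ℓ.val))
          = ∑ i : Fin q, (A j).coeff i
              * (((AdjoinRoot.root (X ^ m - 1 : (ZMod (p j))[X])) ^ ℓ.val) ^ (i : ℕ)) := by
            refine Finset.sum_congr rfl (fun i _ => ?_)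
            rw [hterm i, hzero, zero_mul, add_zero, ← pow_mul, mul_comm ℓ.val (i : ℕ)]
        _ = Polynomial.eval ((AdjoinRoot.root (X ^ m - 1 : (ZMod (p j))[X])) ^ ℓ.val) (A j) := by
            rw [eval_eq_sum_range' (hdegA j), Finset.sum_range]
        _ = 0 := hev
    · -- residue 1 : each term vanishes
      have hone : ((ℓ.val : ℕ) : AdjoinRoot (X ^ m - 1 : (ZMod (p j))[X])) = 1 := by
        have hz : ((ℓ.val : ℕ) : ZMod (p j)) = 1 := by
          rw [← ZMod.natCast_mod, h1, Nat.cast_one]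
        rw [← map_natCast (algebraMap (ZMod (p j)) (AdjoinRoot (X ^ m - 1 : (ZMod (p j))[X]))),
          hz, map_one]
      refine Finset.sum_eq_zero (fun i _ => ?_)
      rw [hterm i, hone]
      ring
end

section
/- Let m = p_1···p_r, S as above, and for j ∈ [r] define f_j(x) = ∏_{ℓ∈S, ℓ≡0 mod p_j}(x − γ^ℓ) in (Z_{p_j}[γ]/(γ^m−1))[x]. Let f be a common lift to R[x] with R = Z_m[γ]/(γ^m−1), and define h(ℓ) = f(γ^ℓ) − ℓ·f(γ^ℓ) for ℓ ∈ {0} ∪ S. Then h(ℓ) = 0 for all ℓ ∈ S. -/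
open Polynomial

lemma crt_zero (r : ℕ) (p : Fin r → ℕ) (hp : ∀ i, (p i).Prime)
    (hinj : Function.Injective p) (m : ℕ) (hm : m = ∏ i, p i) [NeZero m]
    (a : ZMod m) (ha : ∀ j : Fin r, ((a.val : ℕ) : ZMod (p j)) = 0) : a = 0 := by
  have hdvd : ∀ j, p j ∣ a.val := fun j => by
    have := hp j
    haveI : Fact (p j).Prime := ⟨this⟩
    exact (ZMod.natCast_eq_zero_iff _ _).mp (ha j)
  have hmdvd : m ∣ a.val := by
    have heq : ∏ q ∈ Finset.univ.image p, q = ∏ i, p i :=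
      Finset.prod_image (fun x _ y _ h => hinj h)
    conv_lhs => rw [hm, ← heq]
    refine Finset.prod_primes_dvd _ ?_ ?_
    · intro q hq
      simp only [Finset.mem_image] at hq
      obtain ⟨i, _, rfl⟩ := hq
      exact (hp i).prime
    · intro q hq
      simp only [Finset.mem_image] at hq
      obtain ⟨i, _, rfl⟩ := hq
      exact hdvd i
  have hv : a.val = 0 := Nat.eq_zero_of_dvd_of_lt hmdvd (ZMod.val_lt a)
  exact (ZMod.val_eq_zero a).mp hv

lemma zero_of_red (r : ℕ) (p : Fin r → ℕ) (hp : ∀ i, (p i).Prime)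
    (hinj : Function.Injective p) (m : ℕ) (hm : m = ∏ i, p i) [NeZero m]
    (x : AdjoinRoot (X ^ m - 1 : (ZMod m)[X]))
    (hx : ∀ j : Fin r, redHom m (p j) (hm ▸ Finset.dvd_prod_of_mem p (Finset.mem_univ j)) x = 0) :
    x = 0 := by
  by_cases hm1 : m = 1
  · subst hm1
    haveI : Subsingleton ((ZMod 1)[X]) := inferInstance
    haveI : Subsingleton (AdjoinRoot (X ^ 1 - 1 : (ZMod 1)[X])) := by
      constructor
      intro a b
      obtain ⟨ga, rfl⟩ := AdjoinRoot.mk_surjective a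
      obtain ⟨gb, rfl⟩ := AdjoinRoot.mk_surjective b
      rw [Subsingleton.elim ga gb]
    exact Subsingleton.elim x 0
  haveI : Fact (1 < m) := ⟨by have := NeZero.ne m; omega⟩
  haveI : Nontrivial (ZMod m) := ZMod.nontrivial m
  obtain ⟨g, rfl⟩ := AdjoinRoot.mk_surjective x
  have hmonic : (X ^ m - 1 : (ZMod m)[X]).Monic := by
    simpa using monic_X_pow_sub_C (1 : ZMod m) (NeZero.ne m)
  set g' : (ZMod m)[X] := g %ₘ (X ^ m - 1) with hg'
  have hmkg : AdjoinRoot.mk (X ^ m - 1 : (ZMod m)[X]) g = AdjoinRoot.mk _ g' := by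
    rw [AdjoinRoot.mk_eq_mk]
    exact ⟨g /ₘ (X ^ m - 1), by
      have h := Polynomial.modByMonic_add_div g (X ^ m - 1 : (ZMod m)[X])
      linear_combination -h⟩
  have hXdeg : (X ^ m - 1 : (ZMod m)[X]).degree = (m : WithBot ℕ) := by
    simpa using degree_X_pow_sub_C (Nat.pos_of_ne_zero (NeZero.ne m)) (1 : ZMod m)
  have hdeg : g'.degree < (m : WithBot ℕ) := by
    rw [← hXdeg]; exact Polynomial.degree_modByMonic_lt g hmonic
  have hg'0 : g' = 0 := by
    ext k
    refine crt_zero r p hp hinj m hm _ (fun j => ?_)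
    have hdj : p j ∣ m := hm ▸ Finset.dvd_prod_of_mem p (Finset.mem_univ j)
    haveI : Fact (p j).Prime := ⟨hp j⟩
    have h1 := hx j
    rw [hmkg, redHom_mk] at h1
    rw [AdjoinRoot.mk_eq_zero] at h1
    have hz : g'.map (ZMod.castHom hdj (ZMod (p j))) = 0 := by
      refine Polynomial.eq_zero_of_dvd_of_degree_lt h1 ?_
      calc (g'.map (ZMod.castHom hdj (ZMod (p j)))).degree ≤ g'.degree :=
            Polynomial.degree_map_le
        _ < (m : WithBot ℕ) := hdeg
        _ = (X ^ m - 1 : (ZMod (p j))[X]).degree := by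
            simpa using (degree_X_pow_sub_C (Nat.pos_of_ne_zero (NeZero.ne m))
              (1 : ZMod (p j))).symm
    have := congrArg (fun q => Polynomial.coeff q k) hz
    simp only [Polynomial.coeff_map, Polynomial.coeff_zero] at this
    have hcast : ZMod.castHom hdj (ZMod (p j)) (g'.coeff k)
        = (((g'.coeff k).val : ℕ) : ZMod (p j)) := by
      rw [ZMod.castHom_apply, ZMod.natCast_val]
    rw [hcast] at this
    simpa using this
  rw [hmkg, hg'0, map_zero]

/-- With `m = p_1 ⋯ p_r` a product of distinct primes and
`S = {a ∈ ℤ_m \ {0} : a mod p_i ∈ {0,1} ∀ i}`, let `f ∈ R[x]`, `R = ℤ_m[γ]/(γ^m−1)`, be a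
common lift of the polynomials `f_j(x) = ∏_{ℓ∈S, ℓ≡0 mod p_j}(x − γ^ℓ)` over
`ℤ_{p_j}[γ]/(γ^m−1)`. Then `h(ℓ) := f(γ^ℓ) − ℓ·f(γ^ℓ)` vanishes for every `ℓ ∈ S`. -/
theorem stmt_16 (r : ℕ) (p : Fin r → ℕ) (hp : ∀ i, (p i).Prime)
    (hinj : Function.Injective p) (m : ℕ) (hm : m = ∏ i, p i)
    [NeZero m]
    (f : (AdjoinRoot (X ^ m - 1 : (ZMod m)[X]))[X])
    (hf : ∀ j : Fin r,
      f.map (redHom m (p j) (hm ▸ Finset.dvd_prod_of_mem p (Finset.mem_univ j))) =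
        ∏ ℓ ∈ Finset.univ.filter (fun a : ZMod m =>
            a ≠ 0 ∧ (∀ i, a.val % p i = 0 ∨ a.val % p i = 1) ∧ a.val % p j = 0),
          (X - C ((AdjoinRoot.root (X ^ m - 1 : (ZMod (p j))[X])) ^ ℓ.val))) :
    ∀ ℓ : ZMod m, ℓ ≠ 0 → (∀ i, ℓ.val % p i = 0 ∨ ℓ.val % p i = 1) →
      f.eval ((AdjoinRoot.root (X ^ m - 1 : (ZMod m)[X])) ^ ℓ.val)
        - (ℓ.val : AdjoinRoot (X ^ m - 1 : (ZMod m)[X])) *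
          f.eval ((AdjoinRoot.root (X ^ m - 1 : (ZMod m)[X])) ^ ℓ.val) = 0 := by
  intro ℓ hℓ0 hℓmod
  apply zero_of_red r p hp hinj m hm
  intro j
  set φ := redHom m (p j) (hm ▸ Finset.dvd_prod_of_mem p (Finset.mem_univ j)) with hφ
  have heval : φ (f.eval ((AdjoinRoot.root (X ^ m - 1 : (ZMod m)[X])) ^ ℓ.val))
      = (f.map φ).eval ((AdjoinRoot.root (X ^ m - 1 : (ZMod (p j))[X])) ^ ℓ.val) := by
    rw [Polynomial.eval_map, ← Polynomial.eval₂_hom, map_pow, redHom_root]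
  rw [map_sub, map_mul, map_natCast, heval, hf j]
  rcases hℓmod j with h0 | h1
  · have : Polynomial.eval ((AdjoinRoot.root (X ^ m - 1 : (ZMod (p j))[X])) ^ ℓ.val)
        (∏ ℓ' ∈ Finset.univ.filter (fun a : ZMod m =>
            a ≠ 0 ∧ (∀ i, a.val % p i = 0 ∨ a.val % p i = 1) ∧ a.val % p j = 0),
          (X - C ((AdjoinRoot.root (X ^ m - 1 : (ZMod (p j))[X])) ^ ℓ'.val))) = 0 := by
      rw [Polynomial.eval_prod]
      refine Finset.prod_eq_zero (i := ℓ) ?_ ?_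
      · simp only [Finset.mem_filter, Finset.mem_univ, true_and]
        exact ⟨hℓ0, hℓmod, h0⟩
      · simp
    rw [this, mul_zero, sub_zero]
  · have hcast : ((ℓ.val : ℕ) : ZMod (p j)) = 1 := by
      rw [← Nat.mod_add_div ℓ.val (p j), h1]
      push_cast
      simp [ZMod.natCast_self]
    have hcast' : ((ℓ.val : ℕ) : AdjoinRoot (X ^ m - 1 : (ZMod (p j))[X])) = 1 := by
      rw [← map_natCast (algebraMap (ZMod (p j)) (AdjoinRoot (X ^ m - 1 : (ZMod (p j))[X])))
        ℓ.val, hcast, map_one]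
    rw [hcast', one_mul, sub_self]
end

section
/- In the setting of the previous statement, h(0) = f(1) satisfies h(0) mod p_j ≠ 0 in Z_{p_j}[γ]/(γ^m − 1) for every j ∈ [r], i.e., f_j(1) = ∏_{ℓ∈S, ℓ≡0 mod p_j}(1 − γ^ℓ) is nonzero in Z_{p_j}[γ]/(γ^m − 1). -/
open Polynomial

/-- With `m = p_1 ⋯ p_r` a product of distinct primes and
`S = {a ∈ ℤ_m \ {0} : a mod p_i ∈ {0,1} ∀ i}`, for every `j ∈ [r]` the element
`f_j(1) = ∏_{ℓ∈S, ℓ≡0 mod p_j}(1 − γ^ℓ)` is nonzero in `ℤ_{p_j}[γ]/(γ^m−1)`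
(equivalently, `h(0) mod p_j ≠ 0`). -/
theorem stmt_17 (r : ℕ) (p : Fin r → ℕ) (hp : ∀ i, (p i).Prime)
    (hinj : Function.Injective p) (m : ℕ) (hm : m = ∏ i, p i) [NeZero m]
    (j : Fin r) :
    ∏ ℓ ∈ Finset.univ.filter (fun a : ZMod m =>
        a ≠ 0 ∧ (∀ i, a.val % p i = 0 ∨ a.val % p i = 1) ∧ a.val % p j = 0),
      (1 - (AdjoinRoot.root (X ^ m - 1 : (ZMod (p j))[X])) ^ ℓ.val) ≠ 0 := by
  classical
  have hqp : (p j).Prime := hp j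
  haveI : Fact (p j).Prime := ⟨hqp⟩
  have hm0 : m ≠ 0 := NeZero.ne m
  have hqm : p j ∣ m := hm ▸ Finset.dvd_prod_of_mem p (Finset.mem_univ j)
  set n := m / p j with hn
  have hmn : m = n * p j := (Nat.div_mul_cancel hqm).symm
  have hn0 : n ≠ 0 := by
    intro h; exact hm0 (by rw [hmn, h, zero_mul])
  have hcop : Nat.Coprime (p j) n := by
    have hne : n = ∏ i ∈ Finset.univ.erase j, p i := by
      have h1 := Finset.mul_prod_erase Finset.univ p (Finset.mem_univ j)
      rw [hn, hm, ← h1, Nat.mul_div_cancel_left _ hqp.pos]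
    rw [hne]
    exact Nat.Coprime.prod_right fun i hi =>
      (Nat.coprime_primes hqp (hp i)).mpr fun h => (Finset.mem_erase.mp hi).1 (hinj h.symm)
  set K := AlgebraicClosure (ZMod (p j)) with hK
  have hnZ : (n : ZMod (p j)) ≠ 0 := by
    rw [Ne, ZMod.natCast_eq_zero_iff]
    exact hqp.coprime_iff_not_dvd.mp hcop
  haveI : NeZero (n : K) := ⟨by
    have := (map_ne_zero_iff (algebraMap (ZMod (p j)) K)
      (algebraMap (ZMod (p j)) K).injective).mpr hnZ
    simpa using this⟩
  -- get a primitive n-th root of unity in K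
  obtain ⟨ζ, hζroot⟩ : ∃ ζ : K, (Polynomial.cyclotomic n K).IsRoot ζ := by
    apply IsAlgClosed.exists_root
    rw [Polynomial.degree_cyclotomic]
    exact_mod_cast (Nat.totient_pos.mpr (Nat.pos_of_ne_zero hn0)).ne'
  have hζ : IsPrimitiveRoot ζ n := (Polynomial.isRoot_cyclotomic_iff).mp hζroot
  have hζm : ζ ^ m = 1 := by
    rw [hmn, pow_mul, hζ.pow_eq_one, one_pow]
  have hz : (X ^ m - 1 : (ZMod (p j))[X]).eval₂ (algebraMap (ZMod (p j)) K) ζ = 0 := by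
    simp [hζm]
  set φ := AdjoinRoot.lift (algebraMap (ZMod (p j)) K) ζ hz with hφ
  intro h
  have hmap := congrArg φ h
  rw [map_prod, map_zero] at hmap
  have hroot : φ (AdjoinRoot.root (X ^ m - 1 : (ZMod (p j))[X])) = ζ :=
    AdjoinRoot.lift_root hz
  refine (Finset.prod_ne_zero_iff.mpr ?_) hmap
  intro ℓ hℓ
  rw [map_sub, map_one, map_pow, hroot]
  rw [Finset.mem_filter] at hℓ
  obtain ⟨-, hℓ0, -, hℓj⟩ := hℓ
  rw [sub_ne_zero]
  intro heq
  have hdvdn : n ∣ ℓ.val := hζ.dvd_of_pow_eq_one _ heq.symm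
  have hdvdq : p j ∣ ℓ.val := Nat.dvd_of_mod_eq_zero hℓj
  have hdvdm : m ∣ ℓ.val := by
    have h2 : n * p j ∣ ℓ.val := by
      rw [mul_comm]; exact hcop.mul_dvd_of_dvd_of_dvd hdvdq hdvdn
    exact (dvd_of_eq hmn).trans h2
  have hlt : ℓ.val < m := ZMod.val_lt ℓ
  have hne : ℓ.val ≠ 0 := fun h0 => hℓ0 ((ZMod.val_eq_zero ℓ).mp h0)
  exact absurd (Nat.le_of_dvd (Nat.pos_of_ne_zero hne) hdvdm) (not_le.mpr hlt)
end
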